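/- arXiv:1810.05387 — 3 statements merged into one kernel-verified Lean document; each statement's English description precedes it below -/
import Mathlib

section
/- Let (X,d,μ) be a metric measure space in which every ball has positive finite measure, and let w be a nonnegative locally integrable function satisfying the reverse Hölder inequality (⨍_B w^q dμ)^{1/q} ≤ C ⨍_B w dμ for some q > 1, C > 0 on all balls B. Assume moreover that there is a constant B₀ such that μ(B ∖ τB) ≤ B₀ (1-τ) μ(B) for all balls B and all τ ∈ (0,1), where τB is the concentric ball with radius scaled by τ. Then the measure ω defined by dω = w dμ is doubling: there is θ > 0, depending only on q, C, B₀, such that ω(2B) ≤ θ ω(B) for every ball B. -/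
/-!
Write `1/q + 1/p = 1` and pick `τ < 1` so close to `1` that `C (B₀ (1 - τ))^{1/p} ≤ 1/2`.
Hölder's inequality on the annulus `B ∖ τB` followed by the reverse Hölder inequality on `B` gives
`ω(B ∖ τB) ≤ C (μ(B ∖ τB) / μ(B))^{1/p} ω(B) ≤ ω(B) / 2`, hence `ω(B) ≤ 2 ω(τB)`.
Iterating `n` times with `τ^n ≤ 1/2` yields `ω(2B) ≤ 2^n ω(B)`.
-/

open Metric MeasureTheory Filter Topology

theorem inv_mul_rpow_mul_eq {p q m a : ℝ} (hqp : q.HolderConjugate p) (hm : 0 < m) (ha : 0 ≤ a) :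
    (m⁻¹ * a) ^ (1 / q) * m = a ^ (1 / q) * m ^ (1 / p) := by
  have hm1 : m ^ (1 / q) * m ^ (1 / p) = m := by
    rw [← Real.rpow_add hm, one_div, one_div, hqp.inv_add_inv_eq_one, Real.rpow_one]
  have hmq : 0 < m ^ (1 / q) := Real.rpow_pos_of_pos hm _
  rw [Real.mul_rpow (inv_nonneg.2 hm.le) ha, Real.inv_rpow hm.le]
  field_simp
  linear_combination -(a ^ (1 / q)) * hm1

section Integral

variable {α : Type*} [MeasurableSpace α] {μ : Measure α} {f : α → ℝ}

-- Only subadditivity, since `t` need not be measurable.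
theorem setIntegral_le_setIntegral_add_setIntegral_diff {s t : Set α} (hf : ∀ x, 0 ≤ f x)
    (hts : t ⊆ s) (hfs : IntegrableOn f s μ) :
    ∫ y in s, f y ∂μ ≤ (∫ y in t, f y ∂μ) + ∫ y in s \ t, f y ∂μ := by
  have hft := hfs.mono_set hts
  have hfst := hfs.mono_set (s := s \ t) Set.sdiff_subset
  rw [← integral_add_measure hft hfst]
  refine integral_mono_measure ?_ (.of_forall hf) (Integrable.add_measure hft hfst)
  calc μ.restrict s ≤ μ.restrict (t ∪ s \ t) := Measure.restrict_mono (by simp) le_rfl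
    _ ≤ μ.restrict t + μ.restrict (s \ t) := Measure.restrict_union_le _ _

theorem setIntegral_le_rpow_setIntegral_rpow_mul_measureReal {p q : ℝ}
    (hqp : q.HolderConjugate p) {S : Set α} (hS : μ S ≠ ⊤) (hf : ∀ x, 0 ≤ f x)
    (hfm : AEStronglyMeasurable f (μ.restrict S))
    (hfq : IntegrableOn (fun y => f y ^ q) S μ) :
    ∫ y in S, f y ∂μ ≤ (∫ y in S, f y ^ q ∂μ) ^ (1 / q) * μ.real S ^ (1 / p) := by
  have : IsFiniteMeasure (μ.restrict S) := isFiniteMeasure_restrict.2 hS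
  have hq0 : ENNReal.ofReal q ≠ 0 := by simpa using hqp.pos
  have hfLq : MemLp f (ENNReal.ofReal q) (μ.restrict S) := by
    rw [← memLp_norm_rpow_iff hfm hq0 ENNReal.ofReal_ne_top,
      ENNReal.div_self hq0 ENNReal.ofReal_ne_top, ENNReal.toReal_ofReal hqp.nonneg,
      memLp_one_iff_integrable]
    exact hfq.congr (.of_forall fun y => by simp [Real.norm_of_nonneg (hf y)])
  simpa [Measure.real] using integral_mul_le_Lp_mul_Lq_of_nonneg hqp (g := fun _ => (1 : ℝ))
    (.of_forall hf) (.of_forall fun _ => zero_le_one) hfLq (memLp_const 1)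

theorem setIntegral_le_of_reverseHolder {p q C δ : ℝ} (hqp : q.HolderConjugate p)
    {B S : Set α} (hf : ∀ x, 0 ≤ f x) (hμB : 0 < μ B) (hμB_ne_top : μ B ≠ ⊤)
    (hfB : IntegrableOn f B μ) (hfqB : IntegrableOn (fun y => f y ^ q) B μ)
    (hRH : ((μ.real B)⁻¹ * ∫ y in B, f y ^ q ∂μ) ^ (1 / q) ≤
      C * ((μ.real B)⁻¹ * ∫ y in B, f y ∂μ))
    (hSB : S ⊆ B) (hδ : 0 ≤ δ) (hS : μ S ≤ ENNReal.ofReal δ * μ B) :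
    ∫ y in S, f y ∂μ ≤ C * δ ^ (1 / p) * ∫ y in B, f y ∂μ := by
  have hm : 0 < μ.real B := ENNReal.toReal_pos hμB.ne' hμB_ne_top
  have hfq : ∀ y, 0 ≤ f y ^ q := fun y => Real.rpow_nonneg (hf y) q
  have hSm : μ.real S ≤ δ * μ.real B := by
    simpa [Measure.real, ENNReal.toReal_ofReal hδ] using
      ENNReal.toReal_mono (ENNReal.mul_ne_top ENNReal.ofReal_ne_top hμB_ne_top) hS
  calc ∫ y in S, f y ∂μ
      ≤ (∫ y in S, f y ^ q ∂μ) ^ (1 / q) * μ.real S ^ (1 / p) :=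
        setIntegral_le_rpow_setIntegral_rpow_mul_measureReal hqp
          (measure_ne_top_of_subset hSB hμB_ne_top) hf
          (hfB.aestronglyMeasurable.mono_measure (Measure.restrict_mono hSB le_rfl))
          (hfqB.mono_set hSB)
    _ ≤ (∫ y in B, f y ^ q ∂μ) ^ (1 / q) * (δ * μ.real B) ^ (1 / p) := by
        refine mul_le_mul (Real.rpow_le_rpow (setIntegral_nonneg_of_ae (.of_forall hfq))
          (setIntegral_mono_set hfqB (.of_forall hfq) hSB.eventuallyLE)
          (by simpa using hqp.nonneg))
          (Real.rpow_le_rpow measureReal_nonneg hSm (by simpa using hqp.symm.nonneg))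
          (by positivity) (Real.rpow_nonneg (integral_nonneg hfq) _)
    _ = δ ^ (1 / p) * (((μ.real B)⁻¹ * ∫ y in B, f y ^ q ∂μ) ^ (1 / q) * μ.real B) := by
        rw [inv_mul_rpow_mul_eq hqp hm (integral_nonneg hfq), Real.mul_rpow hδ hm.le]
        ring
    _ ≤ δ ^ (1 / p) * (C * ((μ.real B)⁻¹ * ∫ y in B, f y ∂μ) * μ.real B) := by gcongr
    _ = C * δ ^ (1 / p) * ∫ y in B, f y ∂μ := by field_simp

theorem setIntegral_le_two_mul_of_reverseHolder {p q C δ : ℝ} (hqp : q.HolderConjugate p)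
    {B T : Set α} (hf : ∀ x, 0 ≤ f x) (hμB : 0 < μ B) (hμB_ne_top : μ B ≠ ⊤)
    (hfB : IntegrableOn f B μ) (hfqB : IntegrableOn (fun y => f y ^ q) B μ)
    (hRH : ((μ.real B)⁻¹ * ∫ y in B, f y ^ q ∂μ) ^ (1 / q) ≤
      C * ((μ.real B)⁻¹ * ∫ y in B, f y ∂μ))
    (hTB : T ⊆ B) (hδ : 0 ≤ δ) (hsmall : C * δ ^ (1 / p) ≤ 1 / 2)
    (hBT : μ (B \ T) ≤ ENNReal.ofReal δ * μ B) :
    ∫ y in B, f y ∂μ ≤ 2 * ∫ y in T, f y ∂μ := by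
  have hdiff := setIntegral_le_of_reverseHolder hqp hf hμB hμB_ne_top hfB hfqB hRH
    Set.sdiff_subset hδ hBT
  have hsplit := setIntegral_le_setIntegral_add_setIntegral_diff hf hTB hfB
  have hhalf := mul_le_mul_of_nonneg_right hsmall
    (setIntegral_nonneg_of_ae (μ := μ) (s := B) (.of_forall hf))
  have hT := setIntegral_nonneg_of_ae (μ := μ) (s := T) (.of_forall hf)
  linarith

end Integral

theorem exists_pos_lt_one_mul_rpow_le_half (C B : ℝ) {s : ℝ} (hs : 0 < s) :
    ∃ ε, 0 < ε ∧ ε < 1 ∧ C * (B * ε) ^ s ≤ 1 / 2 := by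
  have hlim : Tendsto (fun ε : ℝ => C * (B * ε) ^ s) (𝓝[>] 0) (𝓝 0) := by
    have hcont : Continuous fun ε : ℝ => C * (B * ε) ^ s :=
      ((continuous_const.mul continuous_id).rpow_const fun _ => Or.inr hs.le).const_mul C
    simpa [Real.zero_rpow hs.ne'] using (hcont.tendsto 0).mono_left nhdsWithin_le_nhds
  have hhalf : ∀ᶠ ε in 𝓝[>] (0 : ℝ), C * (B * ε) ^ s ≤ 1 / 2 :=
    hlim.eventually (ge_mem_nhds (by norm_num))
  have hlt : ∀ᶠ ε in 𝓝[>] (0 : ℝ), ε < 1 :=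
    (eventually_lt_nhds one_pos).filter_mono nhdsWithin_le_nhds
  obtain ⟨ε, hsmall, hε1, hε0⟩ := (hhalf.and (hlt.and self_mem_nhdsWithin)).exists
  exact ⟨ε, hε0, hε1, hsmall⟩

theorem le_pow_mul_of_le_mul_comp_mul {F : ℝ → ℝ} {K τ : ℝ} (hK : 0 ≤ K) (hτ : 0 < τ)
    (hF : ∀ r, 0 < r → F r ≤ K * F (τ * r)) (n : ℕ) {r : ℝ} (hr : 0 < r) :
    F r ≤ K ^ n * F (τ ^ n * r) := by
  induction n generalizing r with
  | zero => simp
  | succ n ih =>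
    calc F r ≤ K * F (τ * r) := hF r hr
      _ ≤ K * (K ^ n * F (τ ^ n * (τ * r))) := by gcongr; exact ih (by positivity)
      _ = K ^ (n + 1) * F (τ ^ (n + 1) * r) := by ring_nf

theorem stmt4_general {X : Type*} [MetricSpace X] [MeasurableSpace X] (μ : Measure X)
    (w : X → ℝ) (q C B₀ : ℝ) (hq : 1 < q) (hB₀ : 0 < B₀)
    (hw : ∀ x, 0 ≤ w x)
    (hball : ∀ (x : X) (r : ℝ), 0 < r → 0 < μ (ball x r) ∧ μ (ball x r) < ⊤)
    (hint : ∀ (x : X) (r : ℝ), IntegrableOn w (ball x r) μ)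
    (hintq : ∀ (x : X) (r : ℝ), IntegrableOn (fun y => w y ^ q) (ball x r) μ)
    (hRH : ∀ (x : X) (r : ℝ), 0 < r →
      ((μ (ball x r)).toReal⁻¹ * ∫ y in ball x r, w y ^ q ∂μ) ^ (1 / q) ≤
        C * ((μ (ball x r)).toReal⁻¹ * ∫ y in ball x r, w y ∂μ))
    (hAnn : ∀ (x : X) (r τ : ℝ), 0 < r → 0 < τ → τ < 1 →
      μ (ball x r \ ball x (τ * r)) ≤ ENNReal.ofReal (B₀ * (1 - τ)) * μ (ball x r)) :
    ∃ θ > 0, ∀ (x : X) (r : ℝ), 0 < r →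
      ∫ y in ball x (2 * r), w y ∂μ ≤ θ * ∫ y in ball x r, w y ∂μ := by
  have hqp : q.HolderConjugate (q / (q - 1)) := .conjExponent hq
  obtain ⟨ε, hε0, hε1, hsmall⟩ :=
    exists_pos_lt_one_mul_rpow_le_half C B₀ (one_div_pos.2 hqp.symm.pos)
  have hτ0 : 0 < 1 - ε := by linarith
  have halving : ∀ x r, 0 < r →
      ∫ y in ball x r, w y ∂μ ≤ 2 * ∫ y in ball x ((1 - ε) * r), w y ∂μ := fun x r hr =>
    setIntegral_le_two_mul_of_reverseHolder hqp hw (hball x r hr).1 (hball x r hr).2.ne (hint x r)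
      (hintq x r) (hRH x r hr) (ball_subset_ball (by nlinarith)) (by positivity) hsmall
      (by simpa using hAnn x r (1 - ε) hr hτ0 (by linarith))
  obtain ⟨n, hn⟩ := exists_pow_lt_of_lt_one (by norm_num : (0 : ℝ) < 1 / 2)
    (by linarith : 1 - ε < 1)
  refine ⟨2 ^ n, by positivity, fun x r hr => ?_⟩
  calc ∫ y in ball x (2 * r), w y ∂μ
      ≤ 2 ^ n * ∫ y in ball x ((1 - ε) ^ n * (2 * r)), w y ∂μ :=
        le_pow_mul_of_le_mul_comp_mul (F := fun r => ∫ y in ball x r, w y ∂μ) zero_le_two hτ0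
          (halving x) n (by positivity)
    _ ≤ 2 ^ n * ∫ y in ball x r, w y ∂μ := by
        refine mul_le_mul_of_nonneg_left (setIntegral_mono_set (hint x r) (.of_forall hw) ?_)
          (by positivity)
        exact (ball_subset_ball (by nlinarith)).eventuallyLE

/-- In a metric measure space where balls have positive finite measure, if `w`
satisfies a reverse Hölder inequality with exponent `q > 1` and constant `C` on all balls, and the
annulus bound `μ(B ∖ τB) ≤ B₀ (1-τ) μ(B)` holds, then the measure `dω = w dμ` is doubling:
`ω(2B) ≤ θ ω(B)` for every ball `B`, with `θ` depending only on `q, C, B₀`. -/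
theorem stmt4 {X : Type*} [MetricSpace X] [MeasurableSpace X] (μ : Measure X)
    (w : X → ℝ) (q C B₀ : ℝ) (hq : 1 < q) (hC : 0 < C) (hB₀ : 0 < B₀)
    (hw : ∀ x, 0 ≤ w x)
    (hball : ∀ (x : X) (r : ℝ), 0 < r → 0 < μ (ball x r) ∧ μ (ball x r) < ⊤)
    (hint : ∀ (x : X) (r : ℝ), IntegrableOn w (ball x r) μ)
    (hintq : ∀ (x : X) (r : ℝ), IntegrableOn (fun y => w y ^ q) (ball x r) μ)
    (hRH : ∀ (x : X) (r : ℝ), 0 < r →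
      ((μ (ball x r)).toReal⁻¹ * ∫ y in ball x r, w y ^ q ∂μ) ^ (1 / q) ≤
        C * ((μ (ball x r)).toReal⁻¹ * ∫ y in ball x r, w y ∂μ))
    (hAnn : ∀ (x : X) (r τ : ℝ), 0 < r → 0 < τ → τ < 1 →
      μ (ball x r \ ball x (τ * r)) ≤ ENNReal.ofReal (B₀ * (1 - τ)) * μ (ball x r)) :
    ∃ θ > 0, ∀ (x : X) (r : ℝ), 0 < r →
      ∫ y in ball x (2 * r), w y ∂μ ≤ θ * ∫ y in ball x r, w y ∂μ :=
  stmt4_general μ w q C B₀ hq hB₀ hw hball hint hintq hRH hAnn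
end

section
/- Let w be a nonnegative measurable function on a metric measure space such that for some p > 1 and C > 0, every ball B satisfies (⨍_B w dμ)(⨍_B w^{-1/(p-1)} dμ)^{p-1} ≤ C (the A_p condition). Then for every ball B and every measurable subset E ⊆ B, μ(E)/μ(B) ≤ C^{1/p} (∫_E w dμ / ∫_B w dμ)^{1/p}. -/
/-!
By Hölder's inequality with exponents `p` and `p / (p - 1)`, applied to `1 = w ^ (1/p) * w ^ (-1/p)`
on `E`, one gets `μ(E) ^ p ≤ (∫_E w) (∫_E w ^ (-1/(p-1))) ^ (p - 1)`. Enlarging `E` to `B` in the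
second factor and using the `A_p` condition in the form
`(∫_B w) (∫_B w ^ (-1/(p-1))) ^ (p - 1) ≤ C μ(B) ^ p` gives `(μ(E) / μ(B)) ^ p ≤ C (∫_E w) / ∫_B w`.
-/

open Metric MeasureTheory

namespace MeasureTheory

variable {α : Type*} [MeasurableSpace α] {μ : Measure α}

theorem Integrable.memLp_rpow_inv {f : α → ℝ} (hf : Integrable f μ) (hf0 : 0 ≤ᵐ[μ] f)
    {p : ℝ} (hp : 0 < p) : MemLp (fun x ↦ f x ^ p⁻¹) (ENNReal.ofReal p) μ := by
  refine (integrable_norm_rpow_iff (hf.aemeasurable.pow_const _).aestronglyMeasurable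
    (by simpa using hp) ENNReal.ofReal_ne_top).1 (hf.congr ?_)
  filter_upwards [hf0] with x hx
  rw [ENNReal.toReal_ofReal hp.le, Real.norm_of_nonneg (Real.rpow_nonneg hx _),
    ← Real.rpow_mul hx, inv_mul_cancel₀ hp.ne', Real.rpow_one]

theorem integral_rpow_mul_rpow_le {f g : α → ℝ} (hf0 : 0 ≤ᵐ[μ] f) (hg0 : 0 ≤ᵐ[μ] g)
    (hf : Integrable f μ) (hg : Integrable g μ) {a b : ℝ} (ha : 0 < a) (hb : 0 < b)
    (hab : a + b = 1) :
    ∫ x, f x ^ a * g x ^ b ∂μ ≤ (∫ x, f x ∂μ) ^ a * (∫ x, g x ∂μ) ^ b := by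
  have h := integral_mul_le_Lp_mul_Lq_of_nonneg (.inv_inv ha hb hab)
    (f := fun x ↦ f x ^ a) (g := fun x ↦ g x ^ b)
    (by filter_upwards [hf0] with x hx using Real.rpow_nonneg hx _)
    (by filter_upwards [hg0] with x hx using Real.rpow_nonneg hx _)
    (by simpa using hf.memLp_rpow_inv hf0 (inv_pos.2 ha))
    (by simpa using hg.memLp_rpow_inv hg0 (inv_pos.2 hb))
  have rpow_rpow_inv {h : α → ℝ} {c : ℝ} (hh0 : 0 ≤ᵐ[μ] h) (hc : 0 < c) :
      ∫ x, (h x ^ c) ^ c⁻¹ ∂μ = ∫ x, h x ∂μ :=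
    integral_congr_ae <| by
      filter_upwards [hh0] with x hx
      rw [← Real.rpow_mul hx, mul_inv_cancel₀ hc.ne', Real.rpow_one]
  simpa only [rpow_rpow_inv hf0 ha, rpow_rpow_inv hg0 hb, one_div, inv_inv] using h

theorem setIntegral_pos_of_ae_pos {f : α → ℝ} {s : Set α} (hf : ∀ᵐ x ∂μ.restrict s, 0 < f x)
    (hfi : IntegrableOn f s μ) (hs : μ s ≠ 0) : 0 < ∫ x in s, f x ∂μ := by
  rw [integral_pos_iff_support_of_nonneg_ae (hf.mono fun _ ↦ le_of_lt) hfi, pos_iff_ne_zero]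
  intro h0
  have : (ae (μ.restrict s)).NeBot := ae_neBot.2 (by simpa [Measure.restrict_eq_zero] using hs)
  obtain ⟨x, hx, hx0⟩ := (hf.and (measure_eq_zero_iff_ae_notMem.1 h0)).exists
  exact hx0 hx.ne'

theorem measureReal_rpow_le_setIntegral_mul_setIntegral_rpow {w : α → ℝ} {p : ℝ} {E : Set α}
    (hp : 1 < p) (hw : ∀ᵐ x ∂μ.restrict E, 0 < w x) (hwE : IntegrableOn w E μ)
    (hσE : IntegrableOn (fun x ↦ w x ^ (-(1 / (p - 1)))) E μ) :
    μ.real E ^ p ≤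
      (∫ x in E, w x ∂μ) * (∫ x in E, w x ^ (-(1 / (p - 1))) ∂μ) ^ (p - 1) := by
  have hp0 : 0 < p := zero_lt_one.trans hp
  have hw0 : 0 ≤ᵐ[μ.restrict E] w := hw.mono fun _ ↦ le_of_lt
  have hσ0 : 0 ≤ᵐ[μ.restrict E] fun x ↦ w x ^ (-(1 / (p - 1))) :=
    hw.mono fun _ hx ↦ Real.rpow_nonneg hx.le _
  have hholder := integral_rpow_mul_rpow_le hw0 hσ0 hwE hσE (inv_pos.2 hp0)
    (sub_pos.2 (inv_lt_one_of_one_lt₀ hp)) (add_sub_cancel _ _)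
  have hone : ∀ᵐ x ∂μ.restrict E, w x ^ p⁻¹ * (w x ^ (-(1 / (p - 1)))) ^ (1 - p⁻¹) = 1 := by
    have hexp : p⁻¹ + -(1 / (p - 1)) * (1 - p⁻¹) = 0 := by
      field_simp [(sub_pos.2 hp).ne']
      ring
    filter_upwards [hw] with x hx
    rw [← Real.rpow_mul hx.le, ← Real.rpow_add hx, hexp, Real.rpow_zero]
  rw [integral_congr_ae hone, setIntegral_const, smul_eq_mul, mul_one] at hholder
  calc μ.real E ^ p
      ≤ ((∫ x in E, w x ∂μ) ^ p⁻¹ * (∫ x in E, w x ^ (-(1 / (p - 1))) ∂μ) ^ (1 - p⁻¹)) ^ p :=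
        Real.rpow_le_rpow measureReal_nonneg hholder hp0.le
    _ = (∫ x in E, w x ∂μ) * (∫ x in E, w x ^ (-(1 / (p - 1))) ∂μ) ^ (p - 1) := by
        have hN := integral_nonneg_of_ae hw0
        have hS := integral_nonneg_of_ae hσ0
        rw [Real.mul_rpow (Real.rpow_nonneg hN _) (Real.rpow_nonneg hS _), ← Real.rpow_mul hN,
          ← Real.rpow_mul hS, inv_mul_cancel₀ hp0.ne', Real.rpow_one, sub_mul, one_mul,
          inv_mul_cancel₀ hp0.ne']

theorem setAverage_mul_setAverage_rpow_eq {f g : α → ℝ} {s : Set α} {p : ℝ} (hp : p ≠ 0)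
    (hg : 0 ≤ ∫ x in s, g x ∂μ) :
    (⨍ x in s, f x ∂μ) * (⨍ x in s, g x ∂μ) ^ (p - 1) =
      (∫ x in s, f x ∂μ) * (∫ x in s, g x ∂μ) ^ (p - 1) / μ.real s ^ p := by
  have hM : 0 ≤ (μ.real s)⁻¹ := inv_nonneg.2 measureReal_nonneg
  rw [setAverage_eq, setAverage_eq, smul_eq_mul, smul_eq_mul, Real.mul_rpow hM hg,
    div_eq_mul_inv, ← Real.inv_rpow measureReal_nonneg]
  have hsplit : (μ.real s)⁻¹ ^ p = (μ.real s)⁻¹ * (μ.real s)⁻¹ ^ (p - 1) := by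
    rw [← Real.rpow_one_add' hM (by simpa using hp), add_sub_cancel]
  rw [hsplit]
  ring

theorem measureReal_div_le_of_setAverage_mul_setAverage_rpow_le {w : α → ℝ} {p C : ℝ}
    {B E : Set α} (hp : 1 < p) (hw : ∀ᵐ x ∂μ.restrict B, 0 < w x) (hwB : IntegrableOn w B μ)
    (hσB : IntegrableOn (fun x ↦ w x ^ (-(1 / (p - 1)))) B μ)
    (hAp : (⨍ x in B, w x ∂μ) * (⨍ x in B, w x ^ (-(1 / (p - 1))) ∂μ) ^ (p - 1) ≤ C)
    (hEB : E ⊆ B) :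
    μ.real E / μ.real B ≤ C ^ (1 / p) * ((∫ x in E, w x ∂μ) / ∫ x in B, w x ∂μ) ^ (1 / p) := by
  have hp0 : 0 < p := zero_lt_one.trans hp
  have hwE : ∀ᵐ x ∂μ.restrict E, 0 < w x := ae_restrict_of_ae_restrict_of_subset hEB hw
  have hσ0 : 0 ≤ᵐ[μ.restrict B] fun x ↦ w x ^ (-(1 / (p - 1))) :=
    hw.mono fun _ hx ↦ Real.rpow_nonneg hx.le _
  rw [setAverage_mul_setAverage_rpow_eq hp0.ne' (integral_nonneg_of_ae hσ0)] at hAp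
  set M := μ.real B
  set A := ∫ x in B, w x ∂μ
  set N := ∫ x in E, w x ∂μ
  set S := ∫ x in B, w x ^ (-(1 / (p - 1))) ∂μ
  have hA0 : 0 ≤ A := integral_nonneg_of_ae (hw.mono fun _ ↦ le_of_lt)
  have hN : 0 ≤ N := integral_nonneg_of_ae (hwE.mono fun _ ↦ le_of_lt)
  have hS : 0 ≤ S := integral_nonneg_of_ae hσ0
  have hC : 0 ≤ C := le_trans (by positivity) hAp
  -- `μ.real B = 0` also when `μ B = ∞`; then the left side is `0` by the convention `x / 0 = 0`.
  rcases (measureReal_nonneg : 0 ≤ M).eq_or_lt with hM | hM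
  · rw [show M = 0 from hM.symm, div_zero]
    positivity
  have hA : 0 < A := setIntegral_pos_of_ae_pos hw hwB fun h ↦ hM.ne' (by simp [measureReal_def, h])
  have hAS : A * S ^ (p - 1) ≤ C * M ^ p := (div_le_iff₀ (Real.rpow_pos_of_pos hM p)).1 hAp
  have hES : μ.real E ^ p ≤ N * S ^ (p - 1) :=
    (measureReal_rpow_le_setIntegral_mul_setIntegral_rpow hp hwE (hwB.mono_set hEB)
      (hσB.mono_set hEB)).trans <| mul_le_mul_of_nonneg_left (Real.rpow_le_rpow
        (integral_nonneg_of_ae (ae_restrict_of_ae_restrict_of_subset hEB hσ0))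
        (setIntegral_mono_set hσB hσ0 hEB.eventuallyLE) (sub_pos.2 hp).le) hN
  rw [← Real.mul_rpow hC (div_nonneg hN hA.le), one_div,
    Real.le_rpow_inv_iff_of_pos (div_nonneg measureReal_nonneg hM.le) (by positivity) hp0,
    Real.div_rpow measureReal_nonneg hM.le, div_le_iff₀ (Real.rpow_pos_of_pos hM p)]
  calc μ.real E ^ p ≤ N * S ^ (p - 1) := hES
    _ = N / A * (A * S ^ (p - 1)) := by field_simp
    _ ≤ N / A * (C * M ^ p) := by gcongr
    _ = C * (N / A) * M ^ p := by ring

end MeasureTheory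

theorem stmt5_general {X : Type*} [MetricSpace X] [MeasurableSpace X] (μ : Measure X)
    (w : X → ℝ) (p C : ℝ) (hp : 1 < p)
    (hw : ∀ x, 0 < w x)
    (hint : ∀ (x : X) (r : ℝ), IntegrableOn w (ball x r) μ)
    (hint' : ∀ (x : X) (r : ℝ),
      IntegrableOn (fun y => w y ^ (-(1 / (p - 1)))) (ball x r) μ)
    (hAp : ∀ (x : X) (r : ℝ), 0 < r →
      ((μ (ball x r)).toReal⁻¹ * ∫ y in ball x r, w y ∂μ) *
        ((μ (ball x r)).toReal⁻¹ *
          ∫ y in ball x r, w y ^ (-(1 / (p - 1))) ∂μ) ^ (p - 1) ≤ C) :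
    ∀ (x : X) (r : ℝ), 0 < r → ∀ E ⊆ ball x r, MeasurableSet E →
      (μ E).toReal / (μ (ball x r)).toReal ≤
        C ^ (1 / p) *
          ((∫ y in E, w y ∂μ) / ∫ y in ball x r, w y ∂μ) ^ (1 / p) := by
  intro x r hr E hEB _
  refine measureReal_div_le_of_setAverage_mul_setAverage_rpow_le hp (ae_of_all _ hw) (hint x r)
    (hint' x r) ?_ hEB
  rw [setAverage_eq, setAverage_eq, smul_eq_mul, smul_eq_mul]
  exact hAp x r hr

/-- If `w` satisfies the `A_p` condition
`(⨍_B w)(⨍_B w^{-1/(p-1)})^{p-1} ≤ C` on every ball, then for every ball `B` and every measurable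
subset `E ⊆ B`, `μ(E)/μ(B) ≤ C^{1/p} (∫_E w / ∫_B w)^{1/p}`. -/
theorem stmt5 {X : Type*} [MetricSpace X] [MeasurableSpace X] (μ : Measure X)
    (w : X → ℝ) (p C : ℝ) (hp : 1 < p) (hC : 0 < C)
    (hw : ∀ x, 0 < w x)
    (hball : ∀ (x : X) (r : ℝ), 0 < r → 0 < μ (ball x r) ∧ μ (ball x r) < ⊤)
    (hint : ∀ (x : X) (r : ℝ), IntegrableOn w (ball x r) μ)
    (hint' : ∀ (x : X) (r : ℝ),
      IntegrableOn (fun y => w y ^ (-(1 / (p - 1)))) (ball x r) μ)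
    (hAp : ∀ (x : X) (r : ℝ), 0 < r →
      ((μ (ball x r)).toReal⁻¹ * ∫ y in ball x r, w y ∂μ) *
        ((μ (ball x r)).toReal⁻¹ *
          ∫ y in ball x r, w y ^ (-(1 / (p - 1))) ∂μ) ^ (p - 1) ≤ C) :
    ∀ (x : X) (r : ℝ), 0 < r → ∀ E ⊆ ball x r, MeasurableSet E →
      (μ E).toReal / (μ (ball x r)).toReal ≤
        C ^ (1 / p) *
          ((∫ y in E, w y ∂μ) / ∫ y in ball x r, w y ∂μ) ^ (1 / p) :=
  stmt5_general μ w p C hp hw hint hint' hAp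
end

section
/- Let (M,g) be a smooth compact Riemannian manifold and f, f' : M → ℝ be continuous functions, and let g_f = e^{2f} g. If the Riemannian distance d_f associated to g_f satisfies, for every x ∈ M and a.e. y, that y ↦ d_f(x,y) is Lipschitz with |∇ d_f(x,·)|_{g_0} = e^{f} a.e., then whenever ∫_M e^{pf} dμ_0 ≤ A for some p > n (n = dim M), the function d_f(x,·) lies in the Sobolev space W^{1,p}(M,g_0) with ‖d_f(x,·)‖_{W^{1,p}} ≤ C A for a constant C depending only on (M,g_0) and p, and consequently d_f(x,·) is (1 - n/p)-Hölder continuous with respect to d_0 with Hölder constant depending only on (M,g_0), p, A. -/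
/-! Since `|∇ d_f(x,·)|^p = e^{pf}` a.e., the `L^p` norm of the gradient is controlled by `A`
alone, uniformly in `x`; the Morrey embedding turns this into a uniform Hölder bound, and
`d_f(x,x) = 0` together with the boundedness of `M` turns that into a uniform sup bound, hence a
uniform `L^p` bound on `d_f(x,·)` itself; `μ₀` is finite because it integrates the
continuous positive function `e^{pf}` on the compact `M`. -/

open Metric MeasureTheory Filter
open scoped NNReal

/-- The pointwise (local) Lipschitz constant of `u` at `y`, playing the role of `|∇u|(y)`. -/
noncomputable def localLip {X : Type*} [MetricSpace X] (u : X → ℝ) (y : X) : ℝ :=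
  Filter.limsup (fun z => |u z - u y| / dist z y) (nhdsWithin y {y}ᶜ)

section

variable {X : Type*} [MeasurableSpace X] {μ : Measure X}

theorem isFiniteMeasure_of_integrable_of_continuous_pos [TopologicalSpace X] [CompactSpace X]
    {h : X → ℝ} (hc : Continuous h) (hpos : ∀ x, 0 < h x) (hint : Integrable h μ) :
    IsFiniteMeasure μ := by
  rcases isEmpty_or_nonempty X with hX | hX
  · exact ⟨by simp [Set.univ_eq_empty_iff.mpr hX]⟩
  obtain ⟨x₀, -, hmin⟩ := isCompact_univ.exists_isMinOn Set.univ_nonempty hc.continuousOn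
  have hconst : Integrable (fun _ => h x₀) μ :=
    hint.mono' aestronglyMeasurable_const <| ae_of_all _ fun y => by
      simpa [abs_of_pos (hpos x₀)] using hmin (Set.mem_univ y)
  exact (integrable_const_iff_isFiniteMeasure (hpos x₀).ne').1 hconst

theorem integral_rpow_eq_integral_exp_mul {g f : X → ℝ} (h : ∀ᵐ y ∂μ, g y = Real.exp (f y))
    (p : ℝ) : ∫ y, g y ^ p ∂μ = ∫ y, Real.exp (p * f y) ∂μ := by
  refine integral_congr_ae ?_
  filter_upwards [h] with y hy
  rw [hy, ← Real.exp_mul, mul_comm]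

theorem integral_abs_rpow_rpow_inv_le [IsFiniteMeasure μ] {u : X → ℝ} {p B : ℝ} (hp : 0 < p)
    (hB₀ : 0 ≤ B) (hB : ∀ y, |u y| ≤ B) :
    (∫ y, |u y| ^ p ∂μ) ^ (1 / p) ≤ μ.real Set.univ ^ (1 / p) * B := by
  have hle : ∫ y, |u y| ^ p ∂μ ≤ μ.real Set.univ * B ^ p := by
    simpa [integral_const] using integral_mono_of_nonneg
      (ae_of_all _ fun y => Real.rpow_nonneg (abs_nonneg (u y)) p) (integrable_const (B ^ p))
      (ae_of_all _ fun y => Real.rpow_le_rpow (abs_nonneg _) (hB y) hp.le)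
  calc (∫ y, |u y| ^ p ∂μ) ^ (1 / p)
      ≤ (μ.real Set.univ * B ^ p) ^ (1 / p) :=
        Real.rpow_le_rpow (integral_nonneg fun y => by positivity) hle (by positivity)
    _ = μ.real Set.univ ^ (1 / p) * B := by
        rw [Real.mul_rpow measureReal_nonneg (by positivity), one_div,
          Real.rpow_rpow_inv hB₀ hp.ne']

end

theorem abs_le_mul_diam_rpow_of_holder {X : Type*} [PseudoMetricSpace X] [BoundedSpace X]
    {u : X → ℝ} {K α : ℝ} (hK : 0 ≤ K) (hα : 0 ≤ α)
    (hu : ∀ y z, |u y - u z| ≤ K * dist y z ^ α) {x : X} (hx : u x = 0) (y : X) :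
    |u y| ≤ K * diam (Set.univ : Set X) ^ α := by
  calc |u y| = |u y - u x| := by rw [hx, sub_zero]
    _ ≤ K * dist y x ^ α := hu y x
    _ ≤ K * diam (Set.univ : Set X) ^ α := by
        gcongr
        exact dist_le_diam_of_mem (Bornology.isBounded_univ.2 ‹_›) trivial trivial

theorem stmt6_general {M : Type*} [MetricSpace M] [CompactSpace M] [MeasurableSpace M]
    (μ₀ : Measure M) (n : ℕ) (p A : ℝ) (hp : (n : ℝ) < p) (hA : 0 < A)
    (f : M → ℝ) (hf : Continuous f)
    (df : M → M → ℝ)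
    (hLip : ∀ x : M, ∃ L : ℝ≥0, LipschitzWith L (df x))
    (hzero : ∀ x, df x x = 0)
    (hGrad : ∀ x : M, ∀ᵐ y ∂μ₀, localLip (df x) y = Real.exp (f y))
    -- the Morrey/Sobolev embedding `W^{1,p} ↪ C^{1-n/p}` on `(M, g₀)`, with constant `CM`:
    (CM : ℝ) (hCM : 0 < CM)
    (hMorrey : ∀ u : M → ℝ, (∃ L : ℝ≥0, LipschitzWith L u) → ∀ y z : M,
      |u y - u z| ≤
        CM * (∫ v, localLip u v ^ p ∂μ₀) ^ (1 / p) * dist y z ^ (1 - (n : ℝ) / p))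
    (hint : Integrable (fun y => Real.exp (p * f y)) μ₀)
    (hbound : ∫ y, Real.exp (p * f y) ∂μ₀ ≤ A) :
    ∃ C > 0, ∀ x : M,
      ((∫ y, |df x y| ^ p ∂μ₀) ^ (1 / p) +
        (∫ y, localLip (df x) y ^ p ∂μ₀) ^ (1 / p) ≤ C * A) ∧
      ∀ y z : M, |df x y - df x z| ≤ C * dist y z ^ (1 - (n : ℝ) / p) := by
  have hp₀ : 0 < p := (Nat.cast_nonneg n).trans_lt hp
  have hα : 0 ≤ 1 - (n : ℝ) / p := sub_nonneg.2 ((div_le_one hp₀).2 hp.le)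
  have : IsFiniteMeasure μ₀ := isFiniteMeasure_of_integrable_of_continuous_pos
    (by fun_prop) (fun y => Real.exp_pos (p * f y)) hint
  have hgrad_norm : (∫ y, Real.exp (p * f y) ∂μ₀) ^ (1 / p) ≤ A ^ (1 / p) :=
    Real.rpow_le_rpow (integral_nonneg fun y => (Real.exp_pos _).le) hbound (by positivity)
  have hholder (x y z : M) :
      |df x y - df x z| ≤ CM * A ^ (1 / p) * dist y z ^ (1 - (n : ℝ) / p) := by
    refine (hMorrey _ (hLip x) y z).trans ?_
    rw [integral_rpow_eq_integral_exp_mul (hGrad x)]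
    gcongr
  set K := CM * A ^ (1 / p)
  set B := K * diam (Set.univ : Set M) ^ (1 - (n : ℝ) / p)
  set T := μ₀.real Set.univ ^ (1 / p) * B + A ^ (1 / p)
  refine ⟨T / A + K, by positivity, fun x => ⟨?_, fun y z => (hholder x y z).trans ?_⟩⟩
  · calc _ ≤ T := by
          rw [integral_rpow_eq_integral_exp_mul (hGrad x)]
          exact add_le_add (integral_abs_rpow_rpow_inv_le hp₀ (by positivity)
            (abs_le_mul_diam_rpow_of_holder (by positivity) hα (hholder x) (hzero x))) hgrad_norm
      _ ≤ (T / A + K) * A := by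
          rw [add_mul, div_mul_cancel₀ T hA.ne']
          exact le_add_of_nonneg_right (by positivity)
  · gcongr
    exact le_add_of_nonneg_left (by positivity)

/-- On a closed `n`-manifold `(M, g₀)` (here abstracted as a compact metric
measure space, with `|∇u|` given by the local Lipschitz constant and the Morrey–Sobolev embedding
`W^{1,p} ↪ C^{1-n/p}` for `p > n` assumed as a hypothesis): if the conformal distance `d_f(x,·)`
is Lipschitz with `|∇ d_f(x,·)| = e^f` a.e., and `∫_M e^{pf} dμ₀ ≤ A`, then `d_f(x,·)` lies in
`W^{1,p}` with norm at most `C·A` for a constant `C` depending only on `(M,g₀)` and `p`, and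
`d_f(x,·)` is `(1 - n/p)`-Hölder with constant depending only on `(M,g₀), p, A`. -/
theorem stmt6 {M : Type*} [MetricSpace M] [CompactSpace M] [MeasurableSpace M]
    (μ₀ : Measure M) (n : ℕ) (p A : ℝ) (hn : 1 ≤ n) (hp : (n : ℝ) < p) (hA : 0 < A)
    (f : M → ℝ) (hf : Continuous f)
    (df : M → M → ℝ)
    (hLip : ∀ x : M, ∃ L : ℝ≥0, LipschitzWith L (df x))
    (hzero : ∀ x, df x x = 0)
    (hGrad : ∀ x : M, ∀ᵐ y ∂μ₀, localLip (df x) y = Real.exp (f y))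
    -- the Morrey/Sobolev embedding `W^{1,p} ↪ C^{1-n/p}` on `(M, g₀)`, with constant `CM`:
    (CM : ℝ) (hCM : 0 < CM)
    (hMorrey : ∀ u : M → ℝ, (∃ L : ℝ≥0, LipschitzWith L u) → ∀ y z : M,
      |u y - u z| ≤
        CM * (∫ v, localLip u v ^ p ∂μ₀) ^ (1 / p) * dist y z ^ (1 - (n : ℝ) / p))
    (hint : Integrable (fun y => Real.exp (p * f y)) μ₀)
    (hbound : ∫ y, Real.exp (p * f y) ∂μ₀ ≤ A) :
    ∃ C > 0, ∀ x : M,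
      ((∫ y, |df x y| ^ p ∂μ₀) ^ (1 / p) +
        (∫ y, localLip (df x) y ^ p ∂μ₀) ^ (1 / p) ≤ C * A) ∧
      ∀ y z : M, |df x y - df x z| ≤ C * dist y z ^ (1 - (n : ℝ) / p) :=
  stmt6_general μ₀ n p A hp hA f hf df hLip hzero hGrad CM hCM hMorrey hint hbound
end
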